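/- The I-projection preserves support: if 𝒞(P_1,Q_1) and 𝒞(P_2,Q_2) are geometrically equivalent and S ∈ 𝒞(P_1,Q_1), then supp(I_proj(S)) = supp(S), where I_proj(S) is the I-projection of S onto 𝒞(P_2,Q_2). -/

import Mathlib

open Finset Filter Topology

def IsProbVec {n : ℕ} (P : Fin n → ℝ) : Prop :=
  (∀ i, 0 ≤ P i) ∧ ∑ i, P i = 1

def supp {α : Type*} (P : α → ℝ) : Set α := {i | 0 < P i}

def supp2 {n m : ℕ} (S : Fin n → Fin m → ℝ) : Set (Fin n × Fin m) :=
  {p | 0 < S p.1 p.2}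

def Coupling {n m : ℕ} (P : Fin n → ℝ) (Q : Fin m → ℝ) : Set (Fin n → Fin m → ℝ) :=
  {S | (∀ i j, 0 ≤ S i j) ∧ (∀ i, ∑ j, S i j = P i) ∧ (∀ j, ∑ i, S i j = Q j)}

/-- Kullback-Leibler divergence of bivariate distributions, as a real-valued sum
(valid, with the convention `0 log 0 = 0`, whenever `supp2 T ⊆ supp2 S`). -/
noncomputable def D2 {n m : ℕ} (T S : Fin n → Fin m → ℝ) : ℝ :=
  ∑ i, ∑ j, T i j * Real.log (T i j / S i j)

/-- `T'` is an I-projection of `S` onto `𝒯`: it is absolutely continuous w.r.t. `S`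
(equivalently, `D(T'‖S) < ∞`) and minimizes the divergence among all such elements of `𝒯`
(elements with `¬ supp2 T ⊆ supp2 S` have infinite divergence). -/
def IsIProj {n m : ℕ} (S : Fin n → Fin m → ℝ) (𝒯 : Set (Fin n → Fin m → ℝ))
    (T' : Fin n → Fin m → ℝ) : Prop :=
  T' ∈ 𝒯 ∧ supp2 T' ⊆ supp2 S ∧ ∀ T ∈ 𝒯, supp2 T ⊆ supp2 S → D2 T' S ≤ D2 T S

noncomputable def prodDist {n m : ℕ} (P : Fin n → ℝ) (Q : Fin m → ℝ) :
    Fin n → Fin m → ℝ := fun i j => P i * Q j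

/-- KL divergence of univariate distributions. -/
noncomputable def Dv {n : ℕ} (P Q : Fin n → ℝ) : ℝ :=
  ∑ i, P i * Real.log (P i / Q i)

def GeomEquiv {n m : ℕ} (C1 C2 : Set (Fin n → Fin m → ℝ)) : Prop :=
  (∀ S ∈ C1, ∃ T ∈ C2, supp2 T = supp2 S) ∧ (∀ T ∈ C2, ∃ S ∈ C1, supp2 S = supp2 T)

/-!
The divergence `D(· ‖ S)` has slope `-∞` at `S*` in the direction of any `T ∈ 𝒞(P₂,Q₂)`
that charges an entry `p` where `S*` vanishes: moving to `(1 - ε) S* + ε T` costs `O(ε)` by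
convexity of `x log (x / s)`, but the entry `p` alone contributes `ε T_p log ε`. So an
I-projection onto a convex family charges every entry charged by some member of the family that
is absolutely continuous w.r.t. `S`. Geometric equivalence provides such a member with
support exactly `supp S`.
-/

lemma exists_mul_log_lt {b : ℝ} (hb : 0 < b) (c : ℝ) :
    ∃ ε : ℝ, ε ∈ Set.Ioc 0 1 ∧ b * Real.log ε < c :=
  (Filter.Eventually.and (Ioc_mem_nhdsGT one_pos)
    ((Real.tendsto_log_nhdsGT_zero.const_mul_atBot hb).eventually (eventually_lt_atBot c))).exists

lemma mul_log_div_eq_sub {s : ℝ} (hs : 0 < s) {x : ℝ} (hx : 0 ≤ x) :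
    x * Real.log (x / s) = x * Real.log x - x * Real.log s := by
  rcases hx.eq_or_lt with rfl | hx
  · simp
  · rw [Real.log_div hx.ne' hs.ne', mul_sub]

lemma mul_log_div_mix_le {s a b ε : ℝ} (hs : 0 < s) (ha : 0 ≤ a) (hb : 0 ≤ b)
    (hε0 : 0 ≤ ε) (hε1 : ε ≤ 1) :
    ((1 - ε) * a + ε * b) * Real.log (((1 - ε) * a + ε * b) / s) ≤
      (1 - ε) * (a * Real.log (a / s)) + ε * (b * Real.log (b / s)) := by
  have hmix : 0 ≤ (1 - ε) * a + ε * b := by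
    have := mul_nonneg (sub_nonneg.2 hε1) ha
    have := mul_nonneg hε0 hb
    linarith
  have key := Real.convexOn_mul_log.2 (Set.mem_Ici.2 ha) (Set.mem_Ici.2 hb)
    (sub_nonneg.2 hε1) hε0 (by ring)
  simp only [smul_eq_mul] at key
  rw [mul_log_div_eq_sub hs hmix, mul_log_div_eq_sub hs ha, mul_log_div_eq_sub hs hb]
  nlinarith [key]

lemma mul_log_div_mul_left {s b ε : ℝ} (hs : 0 < s) (hε : 0 < ε) :
    (ε * b) * Real.log (ε * b / s) = ε * (b * Real.log (b / s)) + ε * (b * Real.log ε) := by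
  rcases eq_or_ne b 0 with rfl | hb
  · simp
  · rw [mul_div_assoc, Real.log_mul hε.ne' (div_ne_zero hb hs.ne')]
    ring

section Mixture

variable {n m : ℕ} {A B S : Fin n → Fin m → ℝ}

lemma eq_zero_of_supp2_subset (hA : ∀ i j, 0 ≤ A i j)
    (hAS : supp2 A ⊆ supp2 S) {i : Fin n} {j : Fin m} (h : ¬ 0 < S i j) : A i j = 0 :=
  (hA i j).eq_or_lt.elim Eq.symm fun hpos => absurd (hAS (a := (i, j)) hpos) h

lemma D2_eq_sum_prod (T S : Fin n → Fin m → ℝ) :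
    D2 T S = ∑ q : Fin n × Fin m, T q.1 q.2 * Real.log (T q.1 q.2 / S q.1 q.2) :=
  (Fintype.sum_prod_type' _).symm

lemma supp2_mix_subset (hA : ∀ i j, 0 ≤ A i j) (hB : ∀ i j, 0 ≤ B i j)
    (hAS : supp2 A ⊆ supp2 S) (hBS : supp2 B ⊆ supp2 S) (ε : ℝ) :
    supp2 ((1 - ε) • A + ε • B) ⊆ supp2 S := by
  rintro ⟨i, j⟩ hq
  by_contra h
  have hq : 0 < (1 - ε) * A i j + ε * B i j := hq
  rw [eq_zero_of_supp2_subset hA hAS h, eq_zero_of_supp2_subset hB hBS h] at hq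
  simp at hq

lemma D2_mix_le (hA : ∀ i j, 0 ≤ A i j) (hB : ∀ i j, 0 ≤ B i j)
    (hAS : supp2 A ⊆ supp2 S) (hBS : supp2 B ⊆ supp2 S) {ε : ℝ} (hε0 : 0 < ε) (hε1 : ε ≤ 1)
    {p : Fin n × Fin m} (hAp : A p.1 p.2 = 0) :
    D2 ((1 - ε) • A + ε • B) S ≤
      (1 - ε) * D2 A S + ε * D2 B S + ε * (B p.1 p.2 * Real.log ε) := by
  have hentry : ∀ q : Fin n × Fin m,
      ((1 - ε) * A q.1 q.2 + ε * B q.1 q.2) *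
          Real.log (((1 - ε) * A q.1 q.2 + ε * B q.1 q.2) / S q.1 q.2) ≤
        (1 - ε) * (A q.1 q.2 * Real.log (A q.1 q.2 / S q.1 q.2)) +
          ε * (B q.1 q.2 * Real.log (B q.1 q.2 / S q.1 q.2)) +
          if q = p then ε * (B q.1 q.2 * Real.log ε) else 0 := by
    intro q
    by_cases hS : 0 < S q.1 q.2
    · split_ifs with hqp
      · subst hqp
        rw [hAp, mul_zero, zero_mul, mul_zero, zero_add, zero_add, mul_log_div_mul_left hS hε0]
      · rw [add_zero]
        exact mul_log_div_mix_le hS (hA _ _) (hB _ _) hε0.le hε1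
    · simp [eq_zero_of_supp2_subset hA hAS hS, eq_zero_of_supp2_subset hB hBS hS]
  rw [D2_eq_sum_prod, D2_eq_sum_prod, D2_eq_sum_prod, mul_sum, mul_sum]
  refine (sum_le_sum fun q _ => hentry q).trans_eq ?_
  rw [sum_add_distrib, sum_add_distrib, sum_ite_eq' univ p, if_pos (mem_univ p)]

end Mixture

lemma convex_coupling {n m : ℕ} (P : Fin n → ℝ) (Q : Fin m → ℝ) : Convex ℝ (Coupling P Q) := by
  rintro A ⟨hA0, hAr, hAc⟩ B ⟨hB0, hBr, hBc⟩ a b ha hb hab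
  refine ⟨fun i j => ?_, fun i => ?_, fun j => ?_⟩
  · simp only [Pi.add_apply, Pi.smul_apply, smul_eq_mul]
    exact add_nonneg (mul_nonneg ha (hA0 i j)) (mul_nonneg hb (hB0 i j))
  · simp only [Pi.add_apply, Pi.smul_apply, smul_eq_mul, sum_add_distrib, ← mul_sum, hAr, hBr]
    rw [← add_mul, hab, one_mul]
  · simp only [Pi.add_apply, Pi.smul_apply, smul_eq_mul, sum_add_distrib, ← mul_sum, hAc, hBc]
    rw [← add_mul, hab, one_mul]

theorem IsIProj.supp2_subset {n m : ℕ} {S S' T : Fin n → Fin m → ℝ}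
    {𝒯 : Set (Fin n → Fin m → ℝ)} (h𝒯 : Convex ℝ 𝒯) (h𝒯_nonneg : ∀ U ∈ 𝒯, ∀ i j, 0 ≤ U i j)
    (hS' : IsIProj S 𝒯 S') (hT : T ∈ 𝒯) (hTS : supp2 T ⊆ supp2 S) :
    supp2 T ⊆ supp2 S' := by
  obtain ⟨hS'𝒯, hS'S, hmin⟩ := hS'
  intro p (hp : 0 < T p.1 p.2)
  by_contra hpS'
  have hS'p : S' p.1 p.2 = 0 := (h𝒯_nonneg S' hS'𝒯 _ _).eq_or_lt.resolve_right hpS' |>.symm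
  obtain ⟨ε, ⟨hε0, hε1⟩, hlog⟩ := exists_mul_log_lt hp (D2 S' S - D2 T S)
  have hS'_nonneg := h𝒯_nonneg S' hS'𝒯
  have hT_nonneg := h𝒯_nonneg T hT
  have hmix_le := D2_mix_le hS'_nonneg hT_nonneg hS'S hTS hε0 hε1 hS'p
  have hmin_le := hmin _ (h𝒯 hS'𝒯 hT (sub_nonneg.2 hε1) hε0.le (sub_add_cancel 1 ε))
    (supp2_mix_subset hS'_nonneg hT_nonneg hS'S hTS ε)
  nlinarith [mul_pos hε0 (sub_pos.2 hlog)]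

theorem stmt12_general {n m : ℕ} (P₁ P₂ : Fin n → ℝ) (Q₁ Q₂ : Fin m → ℝ)
    (hGE : GeomEquiv (Coupling P₁ Q₁) (Coupling P₂ Q₂))
    (S Sstar : Fin n → Fin m → ℝ) (hS : S ∈ Coupling P₁ Q₁)
    (hproj : IsIProj S (Coupling P₂ Q₂) Sstar) :
    supp2 Sstar = supp2 S := by
  obtain ⟨T, hT, hTS⟩ := hGE.1 S hS
  refine hproj.2.1.antisymm ?_
  rw [← hTS]
  exact hproj.supp2_subset (convex_coupling P₂ Q₂) (fun U hU => hU.1) hT hTS.subset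

theorem stmt12 {n m : ℕ} (P₁ P₂ : Fin n → ℝ) (Q₁ Q₂ : Fin m → ℝ)
    (hP₁ : IsProbVec P₁) (hQ₁ : IsProbVec Q₁) (hP₂ : IsProbVec P₂) (hQ₂ : IsProbVec Q₂)
    (hGE : GeomEquiv (Coupling P₁ Q₁) (Coupling P₂ Q₂))
    (S Sstar : Fin n → Fin m → ℝ) (hS : S ∈ Coupling P₁ Q₁)
    (hproj : IsIProj S (Coupling P₂ Q₂) Sstar) :
    supp2 Sstar = supp2 S :=
  stmt12_general P₁ P₂ Q₁ Q₂ hGE S Sstar hS hproj
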